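/- Let Λ be a σ-finite measure on 𝒫 satisfying conditions (1.4) and (1.5). Then for every δ > 0, Λ({x ∈ 𝒫 : ⟨x,e_θ⟩ ∉ [1−δ, 1+δ]}) < ∞. -/

import Mathlib

open MeasureTheory ENNReal Filter

noncomputable section

/-- The space `𝒫` of nonincreasing sequences in `[-∞, ∞)` tending to `-∞`,
equipped (as a subtype of `ℕ → EReal`) with the σ-algebra generated by the coordinate maps. -/
def calP : Set (ℕ → EReal) :=
  {x | Antitone x ∧ (∀ n, x n ≠ ⊤) ∧ Tendsto x atTop (nhds ⊥)}

/-- `e^{θ y}`, with the convention that it is `0` when `y = -∞`, even for `θ = 0`. -/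
def eexp (θ : ℝ) (y : EReal) : ℝ≥0∞ :=
  if y = ⊥ then 0 else ENNReal.ofReal (Real.exp (θ * y.toReal))

/-- `⟨x, e_θ⟩ = Σ_{n ≥ 1} e^{θ x_n}` (the sequence is indexed from `0` in Lean). -/
def ip (θ : ℝ) (x : ℕ → EReal) : ℝ≥0∞ := ∑' n, eexp θ (x n)

/-- Condition (1.4): `∫ (1 ∧ x₁²) Λ(dx) < ∞`, with `1 ∧ x₁² = 1` when `x₁ = -∞`. -/
def cond14 (Λ : Measure calP) : Prop :=
  ∫⁻ x : calP, (if x.1 0 = ⊥ then 1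
    else 1 ⊓ ENNReal.ofReal ((x.1 0).toReal ^ 2)) ∂Λ < ∞

/-- Condition (1.5): `∫ (1_{x₁>1} e^{θ x₁} + Σ_{k≥2} e^{θ x_k}) Λ(dx) < ∞`. -/
def cond15 (θ : ℝ) (Λ : Measure calP) : Prop :=
  ∫⁻ x : calP, ((if (1 : EReal) < x.1 0 then eexp θ (x.1 0) else 0)
    + ∑' k, eexp θ (x.1 (k + 1))) ∂Λ < ∞

/-!
Split `⟨x, e_θ⟩ = e^{θ x₁} + Σ_{k ≥ 2} e^{θ x_k}`. By continuity of `t ↦ e^{θ t}` at `0` there is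
`η > 0` with `|e^{θ t} - 1| < δ/2` for `|t| < η`. Hence `⟨x, e_θ⟩ ∉ [1 - δ, 1 + δ]` forces either
`x₁ = -∞` or `|x₁| ≥ η`, a set on which `1 ∧ x₁² ≥ 1 ∧ η²`, or `Σ_{k ≥ 2} e^{θ x_k} ≥ δ/2`.
Both sets have finite measure by Markov's inequality, applied to (1.4) and (1.5) respectively.
-/

lemma MeasureTheory.measure_lt_top_of_forall_le_of_lintegral_lt_top {α : Type*}
    [MeasurableSpace α] {μ : Measure α} {s : Set α} (hs : MeasurableSet s) {c : ℝ≥0∞}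
    (hc : c ≠ 0) {f : α → ℝ≥0∞} (hcf : ∀ x ∈ s, c ≤ f x) (hf : ∫⁻ x, f x ∂μ < ∞) :
    μ s < ∞ := by
  have hmarkov : c * μ s ≤ ∫⁻ x, f x ∂μ :=
    calc c * μ s = ∫⁻ _ in s, c ∂μ := (setLIntegral_const s c).symm
      _ ≤ ∫⁻ x in s, f x ∂μ := setLIntegral_mono' hs hcf
      _ ≤ ∫⁻ x, f x ∂μ := setLIntegral_le_lintegral s f
  exact ENNReal.lt_top_of_mul_ne_top_right (hmarkov.trans_lt hf).ne hc

lemma exists_pos_abs_exp_mul_sub_one_lt (θ : ℝ) {ε : ℝ} (hε : 0 < ε) :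
    ∃ η > 0, ∀ t : ℝ, |t| < η → |Real.exp (θ * t) - 1| < ε := by
  have hcont : Continuous fun t : ℝ => Real.exp (θ * t) := by fun_prop
  obtain ⟨η, hη, h⟩ := Metric.continuous_iff.mp hcont 0 ε hε
  refine ⟨η, hη, fun t ht => ?_⟩
  simpa [Real.dist_eq] using h t (by simpa [Real.dist_eq] using ht)

lemma measurable_eexp (θ : ℝ) : Measurable (eexp θ) :=
  Measurable.ite (measurableSet_singleton ⊥) measurable_const (by fun_prop)

lemma ip_eq_eexp_add_tsum (θ : ℝ) (x : ℕ → EReal) :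
    ip θ x = eexp θ (x 0) + ∑' k, eexp θ (x (k + 1)) :=
  tsum_eq_zero_add' ENNReal.summable

lemma ip_mem_Icc {θ δ : ℝ} (hδ : 0 ≤ δ) {x : ℕ → EReal} (hx₀ : x 0 ≠ ⊥)
    (hhead : |Real.exp (θ * (x 0).toReal) - 1| ≤ δ / 2)
    (htail : ∑' k, eexp θ (x (k + 1)) ≤ ENNReal.ofReal (δ / 2)) :
    ip θ x ∈ Set.Icc (ENNReal.ofReal (1 - δ)) (ENNReal.ofReal (1 + δ)) := by
  obtain ⟨hlower, hupper⟩ := abs_le.mp hhead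
  rw [ip_eq_eexp_add_tsum, eexp, if_neg hx₀]
  constructor
  · exact (ENNReal.ofReal_le_ofReal (by linarith)).trans le_self_add
  · calc ENNReal.ofReal (Real.exp (θ * (x 0).toReal)) + ∑' k, eexp θ (x (k + 1))
        ≤ ENNReal.ofReal (1 + δ / 2) + ENNReal.ofReal (δ / 2) :=
          add_le_add (ENNReal.ofReal_le_ofReal (by linarith)) htail
      _ = ENNReal.ofReal (1 + δ) := by
          rw [← ENNReal.ofReal_add (by linarith) (by linarith)]
          ring_nf

lemma measurable_coord (n : ℕ) : Measurable fun x : calP => x.1 n :=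
  (measurable_pi_apply n).comp measurable_subtype_coe

lemma measure_head_lt_top {Λ : Measure calP} (h14 : cond14 Λ) {η : ℝ} (hη : 0 < η) :
    Λ {x : calP | x.1 0 = ⊥ ∨ η ≤ |(x.1 0).toReal|} < ∞ := by
  have hmeas : MeasurableSet {x : calP | x.1 0 = ⊥ ∨ η ≤ |(x.1 0).toReal|} :=
    (measurable_coord 0 (measurableSet_singleton ⊥)).union
      (measurableSet_le measurable_const (measurable_coord 0).ereal_toReal.abs)
  refine measure_lt_top_of_forall_le_of_lintegral_lt_top hmeas
    (c := 1 ⊓ ENNReal.ofReal (η ^ 2)) (by positivity) (fun x hx => ?_) h14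
  by_cases hx₀ : x.1 0 = ⊥
  · simp only [hx₀, if_true, inf_le_left]
  · have hη_le : η ^ 2 ≤ (x.1 0).toReal ^ 2 := by
      rw [← sq_abs (x.1 0).toReal]
      exact pow_le_pow_left₀ hη.le (hx.resolve_left hx₀) 2
    simp only [hx₀, if_false]
    gcongr

lemma measure_tail_lt_top {θ : ℝ} {Λ : Measure calP} (h15 : cond15 θ Λ) {ε : ℝ} (hε : 0 < ε) :
    Λ {x : calP | ENNReal.ofReal ε ≤ ∑' k, eexp θ (x.1 (k + 1))} < ∞ := by
  have hmeas : MeasurableSet {x : calP | ENNReal.ofReal ε ≤ ∑' k, eexp θ (x.1 (k + 1))} :=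
    measurableSet_le measurable_const
      (Measurable.tsum fun k => (measurable_eexp θ).comp (measurable_coord (k + 1)))
  exact measure_lt_top_of_forall_le_of_lintegral_lt_top hmeas
    (ENNReal.ofReal_pos.mpr hε).ne' (fun x hx => hx.trans le_add_self) h15

theorem stmt2_general (θ : ℝ) (Λ : Measure calP)
    (h14 : cond14 Λ) (h15 : cond15 θ Λ) :
    ∀ δ : ℝ, 0 < δ →
      Λ {x : calP | ip θ x.1 ∉ Set.Icc (ENNReal.ofReal (1 - δ)) (ENNReal.ofReal (1 + δ))}
        < ∞ := by
  intro δ hδ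
  obtain ⟨η, hη, hexp⟩ := exists_pos_abs_exp_mul_sub_one_lt θ (half_pos hδ)
  have hsub : {x : calP | ip θ x.1 ∉ Set.Icc (ENNReal.ofReal (1 - δ)) (ENNReal.ofReal (1 + δ))}
      ⊆ {x : calP | x.1 0 = ⊥ ∨ η ≤ |(x.1 0).toReal|} ∪
        {x : calP | ENNReal.ofReal (δ / 2) ≤ ∑' k, eexp θ (x.1 (k + 1))} := by
    intro x hx
    by_contra hxAB
    simp only [Set.mem_union, Set.mem_ofPred_eq, not_or, not_le] at hxAB
    obtain ⟨⟨hx₀, hhead⟩, htail⟩ := hxAB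
    exact hx (ip_mem_Icc hδ.le hx₀ (hexp _ hhead).le htail.le)
  exact (measure_mono hsub).trans_lt
    (measure_union_lt_top (measure_head_lt_top h14 hη) (measure_tail_lt_top h15 (half_pos hδ)))

/-- for every `δ > 0`, `Λ({x : ⟨x,e_θ⟩ ∉ [1-δ, 1+δ]}) < ∞`. -/
theorem stmt2 (θ : ℝ) (hθ : 0 ≤ θ) (Λ : Measure calP) [SigmaFinite Λ]
    (h14 : cond14 Λ) (h15 : cond15 θ Λ) :
    ∀ δ : ℝ, 0 < δ →
      Λ {x : calP | ip θ x.1 ∉ Set.Icc (ENNReal.ofReal (1 - δ)) (ENNReal.ofReal (1 + δ))}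
        < ∞ :=
  stmt2_general θ Λ h14 h15
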